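/- Let so(n+1,1) be realised as matrices [[λ, −Y, 0],[−X, F, Yᵀ],[0, Xᵀ, −λ]] with X ∈ ℝⁿ column, Y ∈ ℝⁿ row, F skew-symmetric, and let p be the subalgebra with X = 0. For V₀ the element with X = U (a unit vector), F = 0, λ = 0, Y = 0, define inductively p₀ = p, p_{ℓ+1} = {A ∈ p_ℓ : [A,V₀] ∈ p_ℓ + ℝ·V₀}. Then p₁ = {A ∈ p : F·U = 0} and p₂ = {A ∈ p₁ : Y = h·Uᵀ for some h ∈ ℝ}, and p₃ = p₂. -/
import Mathlib


open Matrix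

/-- The matrix `[[λ, −Y, 0],[−X, F, Yᵀ],[0, Xᵀ, −λ]]` realising an element of
`so(n+1,1)`. -/
def soMat (n : ℕ) (l : ℝ) (X Y : Fin n → ℝ) (F : Matrix (Fin n) (Fin n) ℝ) :
    Matrix (Fin 1 ⊕ Fin n ⊕ Fin 1) (Fin 1 ⊕ Fin n ⊕ Fin 1) ℝ :=
  Matrix.of fun i j =>
    match i, j with
    | .inl _, .inl _ => l
    | .inl _, .inr (.inl j) => -Y j
    | .inl _, .inr (.inr _) => 0
    | .inr (.inl i), .inl _ => -X i
    | .inr (.inl i), .inr (.inl j) => F i j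
    | .inr (.inl i), .inr (.inr _) => Y i
    | .inr (.inr _), .inl _ => 0
    | .inr (.inr _), .inr (.inl j) => X j
    | .inr (.inr _), .inr (.inr _) => -l

/-- The parabolic subalgebra `p ⊂ so(n+1,1)`: elements with `X = 0`. -/
def confParabolic (n : ℕ) :
    Set (Matrix (Fin 1 ⊕ Fin n ⊕ Fin 1) (Fin 1 ⊕ Fin n ⊕ Fin 1) ℝ) :=
  {M | ∃ (l : ℝ) (Y : Fin n → ℝ) (F : Matrix (Fin n) (Fin n) ℝ),
    Fᵀ = -F ∧ M = soMat n l 0 Y F}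

/-- One step of the DKR filtration: `{A ∈ q : [A,V₀] ∈ q + ℝ·V₀}`. -/
def dkrStep (n : ℕ)
    (V₀ : Matrix (Fin 1 ⊕ Fin n ⊕ Fin 1) (Fin 1 ⊕ Fin n ⊕ Fin 1) ℝ)
    (q : Set (Matrix (Fin 1 ⊕ Fin n ⊕ Fin 1) (Fin 1 ⊕ Fin n ⊕ Fin 1) ℝ)) :
    Set (Matrix (Fin 1 ⊕ Fin n ⊕ Fin 1) (Fin 1 ⊕ Fin n ⊕ Fin 1) ℝ) :=
  {A ∈ q | ∃ (B : Matrix (Fin 1 ⊕ Fin n ⊕ Fin 1) (Fin 1 ⊕ Fin n ⊕ Fin 1) ℝ)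
    (c : ℝ), B ∈ q ∧ A * V₀ - V₀ * A = B + c • V₀}

section helpers

variable {n : ℕ}

lemma soMat_ext_iff {l l' : ℝ} {X X' Y Y' : Fin n → ℝ} {F F' : Matrix (Fin n) (Fin n) ℝ} :
    soMat n l X Y F = soMat n l' X' Y' F' ↔ l = l' ∧ X = X' ∧ Y = Y' ∧ F = F' := by
  constructor
  · intro h
    refine ⟨?_, funext fun i => ?_, funext fun i => ?_, ?_⟩
    · have := congrFun (congrFun h (.inl 0)) (.inl 0); simpa [soMat] using this
    · have := congrFun (congrFun h (.inr (.inr 0))) (.inr (.inl i)); simpa [soMat] using this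
    · have := congrFun (congrFun h (.inr (.inl i))) (.inr (.inr 0)); simpa [soMat] using this
    · ext i j
      have := congrFun (congrFun h (.inr (.inl i))) (.inr (.inl j)); simpa [soMat] using this
  · rintro ⟨rfl, rfl, rfl, rfl⟩; rfl

lemma comm_eq (l : ℝ) (U Y : Fin n → ℝ) (F : Matrix (Fin n) (Fin n) ℝ)
    (hF : Fᵀ = -F) :
    soMat n l 0 Y F * soMat n 0 U 0 0 - soMat n 0 U 0 0 * soMat n l 0 Y F =
    soMat n (Y ⬝ᵥ U) (fun i => F.mulVec U i - l * U i) 0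
      (Matrix.of fun i j => Y i * U j - U i * Y j) := by
  have hF' : ∀ a b, F a b = - F b a := fun a b => by
    have := congrFun (congrFun hF b) a; simpa [Matrix.transpose_apply] using this
  ext i j
  rcases i with i | i | i <;> rcases j with j | j | j <;>
    simp [soMat, mul_apply, Fintype.sum_sum_type, dotProduct, mulVec,
      Finset.sum_sub_distrib, mul_comm]
  · abel
  · have h2 : ∑ x, U x * F j x = -∑ x, U x * F x j := by
      rw [← Finset.sum_neg_distrib]
      exact Finset.sum_congr rfl fun x _ => by rw [hF' j x]; ring
    rw [h2]; abel

lemma soMat_add_smul (l c : ℝ) (X Y U : Fin n → ℝ) (F : Matrix (Fin n) (Fin n) ℝ) :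
    soMat n l X Y F + c • soMat n 0 U 0 0 = soMat n l (fun i => X i + c * U i) Y F := by
  ext i j
  rcases i with i | i | i <;> rcases j with j | j | j <;> simp [soMat] <;> ring

lemma skew_aux (Y U : Fin n → ℝ) :
    (Matrix.of fun i j => Y i * U j - U i * Y j)ᵀ =
      -(Matrix.of fun i j => Y i * U j - U i * Y j) := by
  ext i j; simp [Matrix.transpose_apply]; ring

lemma skew_quad (U : Fin n → ℝ) (F : Matrix (Fin n) (Fin n) ℝ) (hF : Fᵀ = -F) :
    U ⬝ᵥ F.mulVec U = 0 := by
  have hF' : ∀ a b, F a b = - F b a := fun a b => by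
    have := congrFun (congrFun hF b) a; simpa [Matrix.transpose_apply] using this
  have h : U ⬝ᵥ F.mulVec U = - (U ⬝ᵥ F.mulVec U) := by
    simp only [dotProduct, mulVec, Finset.mul_sum, ← Finset.sum_neg_distrib]
    rw [Finset.sum_comm]
    exact Finset.sum_congr rfl fun i _ => Finset.sum_congr rfl fun j _ => by
      rw [hF' j i]; ring
  linarith

end helpers

/-- The DKR filtration in the conformal case stabilises at `p₂`:
`p₁ = {A ∈ p : F·U = 0}`, `p₂ = {A ∈ p₁ : Y = h·U}` and `p₃ = p₂`. -/
theorem conformal_dkr_filtration (n : ℕ) (U : Fin n → ℝ) (hU : U ⬝ᵥ U = 1) :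
    dkrStep n (soMat n 0 U 0 0) (confParabolic n) =
        {M | ∃ (l : ℝ) (Y : Fin n → ℝ) (F : Matrix (Fin n) (Fin n) ℝ),
          Fᵀ = -F ∧ F.mulVec U = 0 ∧ M = soMat n l 0 Y F} ∧
      dkrStep n (soMat n 0 U 0 0) (dkrStep n (soMat n 0 U 0 0) (confParabolic n)) =
        {M | ∃ (l h : ℝ) (F : Matrix (Fin n) (Fin n) ℝ),
          Fᵀ = -F ∧ F.mulVec U = 0 ∧ M = soMat n l 0 (h • U) F} ∧
      dkrStep n (soMat n 0 U 0 0)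
          (dkrStep n (soMat n 0 U 0 0) (dkrStep n (soMat n 0 U 0 0) (confParabolic n))) =
        dkrStep n (soMat n 0 U 0 0) (dkrStep n (soMat n 0 U 0 0) (confParabolic n)) := by
  -- p₁
  have h1 : dkrStep n (soMat n 0 U 0 0) (confParabolic n) =
      {M | ∃ (l : ℝ) (Y : Fin n → ℝ) (F : Matrix (Fin n) (Fin n) ℝ),
        Fᵀ = -F ∧ F.mulVec U = 0 ∧ M = soMat n l 0 Y F} := by
    ext M
    constructor
    · rintro ⟨⟨l, Y, F, hF, rfl⟩, B, c, ⟨l', Y', F', hF', rfl⟩, heq⟩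
      rw [comm_eq l U Y F hF, soMat_add_smul] at heq
      obtain ⟨hl, hX, hY, hFF⟩ := soMat_ext_iff.mp heq
      have hFU : F.mulVec U = (l + c) • U := funext fun i => by
        have h := congrFun hX i
        simp only [Pi.zero_apply, zero_add, Pi.smul_apply, smul_eq_mul] at h ⊢
        linarith
      have hc : l + c = 0 := by
        have h0 := skew_quad U F hF
        rw [hFU, dotProduct_smul, hU, smul_eq_mul, mul_one] at h0
        exact h0
      exact ⟨l, Y, F, hF, by rw [hFU, hc, zero_smul], rfl⟩
    · rintro ⟨l, Y, F, hF, hFU, rfl⟩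
      refine ⟨⟨l, Y, F, hF, rfl⟩,
        soMat n (Y ⬝ᵥ U) 0 0 (Matrix.of fun i j => Y i * U j - U i * Y j), -l,
        ⟨Y ⬝ᵥ U, 0, _, skew_aux Y U, rfl⟩, ?_⟩
      rw [comm_eq l U Y F hF, soMat_add_smul]
      exact soMat_ext_iff.mpr ⟨rfl, funext fun i => by
        simp only [congrFun hFU i, Pi.zero_apply]; ring, rfl, rfl⟩
  -- a reusable membership for p₂-type elements
  have key : ∀ (l h : ℝ) (F : Matrix (Fin n) (Fin n) ℝ), Fᵀ = -F → F.mulVec U = 0 →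
      soMat n l 0 (h • U) F * soMat n 0 U 0 0 -
        soMat n 0 U 0 0 * soMat n l 0 (h • U) F =
      soMat n h 0 0 0 + (-l) • soMat n 0 U 0 0 := by
    intro l h F hF hFU
    rw [comm_eq l U (h • U) F hF, soMat_add_smul]
    refine soMat_ext_iff.mpr ⟨?_, funext fun i => ?_, rfl, ?_⟩
    · simp [smul_dotProduct, hU]
    · simp only [congrFun hFU i, Pi.zero_apply]; ring
    · ext i j; simp; ring
  -- p₂
  have h2 : dkrStep n (soMat n 0 U 0 0) (dkrStep n (soMat n 0 U 0 0) (confParabolic n)) =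
      {M | ∃ (l h : ℝ) (F : Matrix (Fin n) (Fin n) ℝ),
        Fᵀ = -F ∧ F.mulVec U = 0 ∧ M = soMat n l 0 (h • U) F} := by
    rw [h1]
    ext M
    constructor
    · rintro ⟨⟨l, Y, F, hF, hFU, rfl⟩, B, c, ⟨l', Y', F', hF', hF'U, rfl⟩, heq⟩
      rw [comm_eq l U Y F hF, soMat_add_smul] at heq
      obtain ⟨hl, hX, hY, hFF⟩ := soMat_ext_iff.mp heq
      rw [← hFF] at hF'U
      have hY2 : Y = (Y ⬝ᵥ U) • U := funext fun i => by
        have h := congrFun hF'U i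
        simp only [mulVec, dotProduct, Matrix.of_apply, sub_mul, Finset.sum_sub_distrib,
          mul_assoc, ← Finset.mul_sum, Pi.zero_apply] at h
        have hUU : ∑ j, U j * U j = 1 := hU
        rw [hUU, mul_one] at h
        simp only [Pi.smul_apply, smul_eq_mul, dotProduct]
        linarith
      exact ⟨l, Y ⬝ᵥ U, F, hF, hFU, by rw [← hY2]⟩
    · rintro ⟨l, h, F, hF, hFU, rfl⟩
      refine ⟨⟨l, h • U, F, hF, hFU, rfl⟩, soMat n h 0 0 0, -l,
        ⟨h, 0, 0, by simp, by simp,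
          soMat_ext_iff.mpr ⟨rfl, rfl, by funext i; simp, rfl⟩⟩, key l h F hF hFU⟩
  refine ⟨h1, h2, ?_⟩
  -- p₃ = p₂
  rw [h2]
  ext M
  constructor
  · exact fun hM => hM.1
  · rintro ⟨l, h, F, hF, hFU, rfl⟩
    refine ⟨⟨l, h, F, hF, hFU, rfl⟩, soMat n h 0 0 0, -l,
      ⟨h, 0, 0, by simp, by simp,
        soMat_ext_iff.mpr ⟨rfl, rfl, by funext i; simp, rfl⟩⟩, key l h F hF hFU⟩
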